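/- arXiv:0902.0771 — 7 statements merged into one kernel-verified Lean document; each statement's English description precedes it below -/
import Mathlib

section
/- Let L be a cubic algebra and let a, b, c ∈ L with a ≤ b and a ≤ c. Then b ∼ c if and only if b = c; that is, Δ(b ∨ c, b) = c if and only if b = c. -/
universe u

/-- A cubic algebra: a join-semilattice with greatest element `⊤` and a binary
operation `Δ` satisfying the axioms of Bailey–Oliveira. `dot x y` is the derived
implication operation `x·y = Δ(⊤, Δ(x ⊔ y, y)) ⊔ y`. -/
class CubicAlgebra (L : Type u) extends SemilatticeSup L, OrderTop L where
  Δ : L → L → L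
  dot : L → L → L
  dot_def : ∀ x y : L, dot x y = Δ ⊤ (Δ (x ⊔ y) y) ⊔ y
  Δ_join : ∀ x y : L, x ≤ y → Δ y x ⊔ x = y
  Δ_comp : ∀ x y z : L, x ≤ y → y ≤ z → Δ z (Δ y x) = Δ (Δ z y) (Δ z x)
  Δ_invol : ∀ x y : L, x ≤ y → Δ y (Δ y x) = x
  Δ_mono : ∀ x y z : L, x ≤ y → y ≤ z → Δ z x ≤ Δ z y
  dot_dot : ∀ x y : L, dot (dot x y) y = x ⊔ y
  dot_exch : ∀ x y z : L, dot x (dot y z) = dot y (dot x z)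

namespace CubicAlgebra

variable {L : Type u} [CubicAlgebra L]

/-- `a ∼ b` iff `Δ(a ⊔ b, a) = b`. -/
def sim (a b : L) : Prop := Δ (a ⊔ b) a = b

/-- `m` is the greatest lower bound of `a` and `b`. -/
def IsMeet (a b m : L) : Prop := m ≤ a ∧ m ≤ b ∧ ∀ c : L, c ≤ a → c ≤ b → c ≤ m

/-- A special subalgebra of a cubic algebra. -/
structure IsSpecial (S : Set L) : Prop where
  top_mem : (⊤ : L) ∈ S
  upward : ∀ x ∈ S, ∀ y : L, x ≤ y → y ∈ S
  dot_mem : ∀ x ∈ S, ∀ y ∈ S, dot x y ∈ S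
  compat : ∀ x ∈ S, ∀ y ∈ S, x ⊔ Δ ⊤ y = ⊤
  meet_mem : ∀ x ∈ S, ∀ y ∈ S, ∀ m : L, IsMeet x y m → m ∈ S

/-- `A ∨ B` for sets: all existing meets `a ∧ b`, `a ∈ A`, `b ∈ B`. -/
def svee (A B : Set L) : Set L := {z | ∃ a ∈ A, ∃ b ∈ B, IsMeet a b z}

/-- `J → I` for sets. -/
def sarrow (J I : Set L) : Set L := {h | h ∈ I ∧ ∀ g ∈ J, h ⊔ g = ⊤}

/-- `Δ(J, I) := J ∨ Δ(⊤, J → I)`. -/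
def sDelta (J I : Set L) : Set L := svee J ((fun b => Δ ⊤ b) '' sarrow J I)

/-- `I_g := {Δ(g ⊔ f, f) : f ∈ I}`. -/
def shift (I : Set L) (g : L) : Set L := {z | ∃ f ∈ I, z = Δ (g ⊔ f) f}

end CubicAlgebra

namespace CubicAlgebra

variable {L : Type u} [CubicAlgebra L]

theorem Δ_le {x y : L} (h : x ≤ y) : Δ y x ≤ y :=
  (Δ_join x y h).le.trans' le_sup_left

theorem Δ_self (x : L) : Δ x x = x := by
  have hle : Δ x x ≤ x := Δ_le le_rfl
  refine le_antisymm hle ?_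
  calc x = Δ x (Δ x x) := (Δ_invol x x le_rfl).symm
    _ ≤ Δ x x := Δ_mono (Δ x x) x x hle le_rfl

theorem Δ_eq_of_Δ_eq {x y z : L} (hxz : x ≤ z) (h : Δ z x = y) : Δ z y = x :=
  h ▸ Δ_invol x z hxz

theorem sim.symm {b c : L} (h : sim b c) : sim c b := by
  unfold sim at *
  rw [sup_comm]
  exact Δ_eq_of_Δ_eq le_sup_left h

theorem le_of_Δ_le {x y z : L} (hxz : x ≤ z) (hxy : x ≤ y) (h : Δ z x ≤ y) : z ≤ y :=
  Δ_join x z hxz ▸ sup_le h hxy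

/-- With `e = b ⊔ c`, monotonicity gives `Δ(e, a) ≤ Δ(e, c) = b`, and `e = Δ(e, a) ∨ a ≤ b`. -/
theorem le_of_sim {a b c : L} (hab : a ≤ b) (hac : a ≤ c) (h : sim b c) : c ≤ b := by
  have hcb : Δ (b ⊔ c) c = b := Δ_eq_of_Δ_eq le_sup_left h
  have hΔa : Δ (b ⊔ c) a ≤ b := (Δ_mono a c _ hac le_sup_right).trans_eq hcb
  exact le_sup_right.trans (le_of_Δ_le (hab.trans le_sup_left) hab hΔa)

end CubicAlgebra

open CubicAlgebra in
/-- In a cubic algebra, if `a ≤ b` and `a ≤ c` then `b ∼ c` iff `b = c`. -/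
theorem sim_iff_eq_of_le {L : Type u} [CubicAlgebra L] (a b c : L)
    (hab : a ≤ b) (hac : a ≤ c) :
    Δ (b ⊔ c) b = c ↔ b = c := by
  refine ⟨fun h => le_antisymm (le_of_sim hac hab (sim.symm h)) (le_of_sim hab hac h), ?_⟩
  rintro rfl
  rw [sup_idem, Δ_self]
end

section
/- Let ℐ be an implication algebra and let ⟨a, b⟩ and ⟨c, d⟩ be elements of 𝖨(ℐ). Then ⟨a, b⟩ ∼ ⟨c, d⟩ if and only if a ∧ b = c ∧ d. -/
universe u

/-- An implication algebra, with its (unique) top element `one = a → a`. -/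
class ImplicationAlgebra (I : Type u) where
  impl : I → I → I
  one : I
  impl_self : ∀ a : I, impl a a = one
  contraction : ∀ a b : I, impl (impl a b) a = a
  quasi_comm : ∀ a b : I, impl (impl a b) b = impl (impl b a) a
  exchange : ∀ a b c : I, impl a (impl b c) = impl b (impl a c)

namespace ImplicationAlgebra

variable {I : Type u} [ImplicationAlgebra I]

/-- The partial order: `a ≤ b` iff `a → b = 1`. -/
def le (a b : I) : Prop := impl a b = one

/-- The join: `a ∨ b = (a → b) → b`. -/
def join (a b : I) : I := impl (impl a b) b

/-- `m` is the greatest lower bound of `a` and `b`. -/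
def IsMeet (a b m : I) : Prop := le m a ∧ le m b ∧ ∀ c : I, le c a → le c b → le c m

/-- `⟨a,b⟩ ∼ ⟨c,d⟩` in `𝖨(I)`: `Δ(⟨a,b⟩ ∨ ⟨c,d⟩, ⟨c,d⟩) = ⟨a,b⟩`, written out
componentwise via the (existing) meets. -/
def psim (p q : I × I) : Prop :=
  IsMeet (join p.1 q.1) (impl (join p.2 q.2) q.2) p.1 ∧
  IsMeet (join p.2 q.2) (impl (join p.1 q.1) q.1) p.2

lemma impl_one_left (x : I) : impl one x = x := by
  have h := contraction x x
  rwa [impl_self] at h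

lemma le_one (x : I) : le x one := by
  have h := contraction one x
  rw [impl_one_left] at h
  exact h

lemma join_one_left (x : I) : join one x = one := by
  unfold join
  rw [impl_one_left, impl_self]

/-- The carrier of `𝖨(I)`: pairs `⟨a,b⟩` with `a ∨ b = 1` and `a ∧ b` existing. -/
def II (I : Type u) [ImplicationAlgebra I] : Type u :=
  {p : I × I // join p.1 p.2 = one ∧ ∃ m : I, IsMeet p.1 p.2 m}

/-- The natural embedding `x ↦ ⟨1, x⟩` of `I` into `𝖨(I)`. -/
def emb (x : I) : II I :=
  ⟨(one, x), join_one_left x, x, le_one x, impl_self x, fun _ _ hc => hc⟩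

end ImplicationAlgebra

/-!
For fixed `m`, the map `x ↦ x → m` is a complementation on the interval `[m, 1]`; in particular,
if `a ∨ b = 1` and `m = a ∧ b`, then `b = a → m`. So when `a ∧ b = c ∧ d = m`,
`(b ∨ d) → d = b → d = b → (c → m) = c → (b → m) = c → a`, and `a` is the meet of `a ∨ c` and
`c → a` in every implication algebra; symmetrically for `b`. Conversely, the two meet conditions
in `⟨a,b⟩ ∼ ⟨c,d⟩` make `a ∧ b` a lower bound of `c` and `d`, and put every lower bound of `c` and
`d` below both `a` and `b`.
-/

namespace ImplicationAlgebra

variable {I : Type u} [ImplicationAlgebra I] {a b c d m x y z w : I}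

theorem le_refl (x : I) : le x x := impl_self x

theorem le.antisymm (h₁ : le x y) (h₂ : le y x) : x = y := by
  have h := quasi_comm x y
  rwa [(h₁ : impl x y = one), (h₂ : impl y x = one), impl_one_left, impl_one_left, eq_comm] at h

theorem le_impl (x y : I) : le y (impl x y) := by
  rw [le, exchange, impl_self, le_one]

theorem le_impl_comm : le x (impl y z) ↔ le y (impl x z) := by
  rw [le, le, exchange]

theorem impl_anti_left (h : le x y) (z : I) : le (impl y z) (impl x z) := by
  rw [le, exchange, quasi_comm, exchange, (h : impl x y = one), le_one]

theorem le.trans (h₁ : le x y) (h₂ : le y z) : le x z := by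
  have h := impl_anti_left h₁ z
  rwa [le, (h₂ : impl y z = one), impl_one_left] at h

theorem impl_impl_self (x y : I) : impl x (impl x y) = impl x y := by
  refine le.antisymm ?_ (le_impl x _)
  have h := quasi_comm (impl x y) x
  rwa [contraction, impl_self, eq_comm] at h

theorem le_of_le_impl (hxy : le x y) (h : le x (impl y z)) : le x z := by
  have h' := hxy.trans (le_impl_comm.mp h)
  rwa [le, impl_impl_self] at h'

theorem join_comm (x y : I) : join x y = join y x := quasi_comm x y

theorem join_eq_right (h : le x y) : join x y = y := by
  rw [join, (h : impl x y = one), impl_one_left]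

theorem join_eq_left (h : le y x) : join x y = x := by
  rw [join_comm, join_eq_right h]

theorem le_join_left (x y : I) : le x (join x y) := by
  rw [le, join, exchange, impl_self]

theorem le_join_right (x y : I) : le y (join x y) := le_impl _ _

theorem join_le (h₁ : le x z) (h₂ : le y z) : le (join x y) z := by
  rw [← join_eq_left h₂]
  exact impl_anti_left (impl_anti_left h₁ y) y

theorem impl_mono_right (h : le y z) (x : I) : le (impl x y) (impl x z) := by
  rw [← join_eq_left h, join, exchange]
  exact le_impl _ _

theorem impl_eq_of_join_eq_one (h : join x y = one) : impl x y = y :=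
  le.antisymm h (le_impl x y)

theorem impl_join_left (x y : I) : impl (join x y) y = impl x y :=
  le.antisymm (impl_anti_left (le_join_left x y) y) (le_join_left (impl x y) y)

theorem impl_le_of_impl_le (hm : le m x) (h : le (impl x m) w) : le (impl w m) x := by
  have h' := impl_anti_left h m
  rwa [show impl (impl x m) m = x from join_eq_left hm] at h'

theorem isMeet_join_impl (a c : I) : IsMeet (join a c) (impl c a) a := by
  refine ⟨le_join_left a c, le_impl c a, fun z hz₁ hz₂ => ?_⟩
  exact le_of_le_impl (le_refl z) (hz₁.trans (join_le (le_impl z a) (le_impl_comm.mp hz₂)))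

theorem IsMeet.symm (h : IsMeet a b m) : IsMeet b a m :=
  ⟨h.2.1, h.1, fun z hza hzb => h.2.2 z hzb hza⟩

theorem IsMeet.unique (h₁ : IsMeet a b m) (h₂ : IsMeet a b x) : m = x :=
  le.antisymm (h₂.2.2 m h₁.1 h₁.2.1) (h₁.2.2 x h₂.1 h₂.2.1)

theorem IsMeet.impl_eq (hab : join a b = one) (hm : IsMeet a b m) : impl a m = b := by
  refine le.antisymm ?_ ?_
  · simpa only [impl_eq_of_join_eq_one hab] using impl_mono_right hm.2.1 a
  -- `(b → (a → m)) → m` lies below `a` and `b`, hence equals `m`; so `b → (a → m) = 1`.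
  · have hpb : le (impl (impl b (impl a m)) m) b :=
      impl_le_of_impl_le hm.2.1 (impl_mono_right (le_impl a m) b)
    have hpa : le (impl (impl b (impl a m)) m) a := by
      refine impl_le_of_impl_le hm.1 ?_
      rw [exchange]
      exact impl_mono_right (le_impl b m) a
    have hp : impl (impl b (impl a m)) m = m := le.antisymm (hm.2.2 _ hpa hpb) (le_impl _ _)
    have hmu : le m (impl b (impl a m)) := (le_impl a m).trans (le_impl b _)
    rw [le, ← join_eq_left hmu, join, hp, impl_self]

theorem isMeet_join_impl_join_of_isMeet (hab : join a b = one) (hcd : join c d = one)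
    (hmab : IsMeet a b m) (hmcd : IsMeet c d m) :
    IsMeet (join a c) (impl (join b d) d) a := by
  have h : impl (join b d) d = impl c a := by
    rw [impl_join_left, ← hmcd.impl_eq hcd, exchange,
      hmab.symm.impl_eq (by rwa [join_comm])]
  rw [h]
  exact isMeet_join_impl a c

theorem psim_of_isMeet (hab : join a b = one) (hcd : join c d = one)
    (hmab : IsMeet a b m) (hmcd : IsMeet c d m) : psim (a, b) (c, d) :=
  ⟨isMeet_join_impl_join_of_isMeet hab hcd hmab hmcd,
    isMeet_join_impl_join_of_isMeet (by rwa [join_comm]) (by rwa [join_comm])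
      hmab.symm hmcd.symm⟩

section PsimComponent

variable (h : IsMeet (join a c) (impl (join b d) d) a)
include h

theorem le_right_of_isMeet_join_impl (hxa : le x a) (hxb : le x b) : le x d :=
  le_of_le_impl (hxb.trans (le_join_left b d)) (hxa.trans h.2.1)

theorem le_of_isMeet_join_impl (hzc : le z c) (hzd : le z d) : le z a :=
  h.2.2 z (hzc.trans (le_join_right a c)) (hzd.trans (le_impl _ _))

end PsimComponent

theorem IsMeet.of_psim (h : psim (a, b) (c, d)) (hm : IsMeet a b m) : IsMeet c d m :=
  ⟨le_right_of_isMeet_join_impl h.2 hm.2.1 hm.1, le_right_of_isMeet_join_impl h.1 hm.1 hm.2.1,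
    fun _ hzc hzd => hm.2.2 _ (le_of_isMeet_join_impl h.1 hzc hzd)
      (le_of_isMeet_join_impl h.2 hzd hzc)⟩

end ImplicationAlgebra

open ImplicationAlgebra in
/-- In `𝖨(ℐ)`, `⟨a,b⟩ ∼ ⟨c,d⟩` iff `a ∧ b = c ∧ d`. -/
theorem psim_iff_meet_eq {I : Type u} [ImplicationAlgebra I] (a b c d m₁ m₂ : I)
    (hab : join a b = one) (hcd : join c d = one)
    (hm₁ : IsMeet a b m₁) (hm₂ : IsMeet c d m₂) :
    psim (a, b) (c, d) ↔ m₁ = m₂ := by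
  constructor
  · exact fun h => (hm₁.of_psim h).unique hm₂
  · rintro rfl
    exact psim_of_isMeet hab hcd hm₁ hm₂
end

section
/- Let B be a Boolean algebra and let b, c be intervals in B (elements of the interval algebra 𝓘(B)). Then b ∼ c if and only if ℓ(b) = ℓ(c). -/
universe u

variable {B : Type u} [BooleanAlgebra B]

/-- An interval `[lo, hi]` in a Boolean algebra `B`. -/
structure BInterval (B : Type u) [BooleanAlgebra B] where
  lo : B
  hi : B
  le : lo ≤ hi

namespace BInterval

/-- Join of intervals: `[a,b] ∨ [c,d] = [a ⊓ c, b ⊔ d]`. -/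
def ijoin (x y : BInterval B) : BInterval B :=
  ⟨x.lo ⊓ y.lo, x.hi ⊔ y.hi, le_trans (le_trans inf_le_left x.le) le_sup_left⟩

/-- The top interval `[⊥, ⊤]`. -/
def itop : BInterval B := ⟨⊥, ⊤, bot_le⟩

/-- `Δ([a,b],[c,d]) = [a ⊔ (b ⊓ dᶜ), b ⊓ (a ⊔ cᶜ)]`, for `[c,d] ⊆ [a,b]`. -/
def idelta (x y : BInterval B) (_h1 : x.lo ≤ y.lo) (_h2 : y.hi ≤ x.hi) : BInterval B :=
  ⟨x.lo ⊔ (x.hi ⊓ y.hiᶜ), x.hi ⊓ (x.lo ⊔ y.loᶜ),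
    sup_le (le_inf x.le le_sup_left)
      (le_inf inf_le_left
        (le_trans (le_trans inf_le_right (compl_le_compl y.le)) le_sup_right))⟩

/-- The length `ℓ([a,b]) = aᶜ ⊓ b` of an interval. -/
def length (x : BInterval B) : B := x.loᶜ ⊓ x.hi

end BInterval

/-!
Write `x = [a, b]` and `y = [c, d]`. Both sides of the equivalence unfold to the same four
order conditions
  `b ≤ a ⊔ d`,  `d ≤ c ⊔ b`,  `Disjoint ℓ(x) c`,  `Disjoint ℓ(y) a`.
The lower endpoint of `Δ(x ∨ y, y)` is `a` iff the first and the last hold, its upper endpoint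
is `b` iff the middle two hold; on the other side, `ℓ(x) ≤ ℓ(y)` is the first and the third,
and `ℓ(y) ≤ ℓ(x)` the second and the fourth.
-/

section DistribLattice

variable {α : Type*} [DistribLattice α] {a b c e : α}

theorem le_inf_sup_inf_iff_of_le (hab : a ≤ b) : a ≤ a ⊓ c ⊔ b ⊓ e ↔ a ≤ c ⊔ e := by
  refine ⟨fun h ↦ h.trans (sup_le_sup inf_le_right inf_le_right), fun h ↦ ?_⟩
  calc a ≤ a ⊓ (c ⊔ e) := le_inf le_rfl h
    _ = a ⊓ c ⊔ a ⊓ e := inf_sup_left _ _ _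
    _ ≤ a ⊓ c ⊔ b ⊓ e := sup_le_sup_left (inf_le_inf_right e hab) _

theorem sup_inf_sup_le_iff_of_le (hab : a ≤ b) : (b ⊔ c) ⊓ (a ⊔ e) ≤ b ↔ c ⊓ e ≤ b := by
  refine ⟨le_trans (inf_le_inf le_sup_right le_sup_right), fun h ↦ ?_⟩
  calc (b ⊔ c) ⊓ (a ⊔ e)
      _ = b ⊓ (a ⊔ e) ⊔ (c ⊓ a ⊔ c ⊓ e) := by rw [inf_sup_right, inf_sup_left c]
      _ ≤ b := sup_le inf_le_left (sup_le (inf_le_right.trans hab) h)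

end DistribLattice

namespace BInterval

theorem ext_iff {x y : BInterval B} : x = y ↔ x.lo = y.lo ∧ x.hi = y.hi := by
  cases x; cases y; simp

theorem length_le_length_iff (x y : BInterval B) :
    x.length ≤ y.length ↔ Disjoint x.length y.lo ∧ x.hi ≤ x.lo ⊔ y.hi := by
  rw [length, length, le_inf_iff, le_compl_iff_disjoint_right, inf_comm, ← sdiff_eq, sdiff_le_iff]

theorem idelta_ijoin_lo_eq_iff (x y : BInterval B) :
    (idelta (ijoin x y) y inf_le_right le_sup_right).lo = x.lo ↔
      x.hi ≤ x.lo ⊔ y.hi ∧ Disjoint y.length x.lo := by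
  have hlo : (idelta (ijoin x y) y inf_le_right le_sup_right).lo = x.lo ⊓ y.lo ⊔ x.hi ⊓ y.hiᶜ := by
    simp [idelta, ijoin, inf_sup_right]
  rw [hlo, le_antisymm_iff, sup_le_iff, le_inf_sup_inf_iff_of_le x.le, ← sdiff_eq, sdiff_le_iff',
    length, disjoint_comm, ← le_compl_iff_disjoint_right, compl_inf, compl_compl,
    and_iff_right inf_le_left]

theorem idelta_ijoin_hi_eq_iff (x y : BInterval B) :
    (idelta (ijoin x y) y inf_le_right le_sup_right).hi = x.hi ↔
      y.hi ≤ y.lo ⊔ x.hi ∧ Disjoint x.length y.lo := by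
  have hhi : (idelta (ijoin x y) y inf_le_right le_sup_right).hi =
      (x.hi ⊔ y.hi) ⊓ (x.lo ⊔ y.loᶜ) := by
    simp [idelta, ijoin, sup_inf_right]
  rw [hhi, length, ← le_compl_iff_disjoint_right, inf_comm x.loᶜ, ← sdiff_eq, sdiff_le_iff,
    le_antisymm_iff, sup_inf_sup_le_iff_of_le x.le, le_inf_iff, and_iff_right le_sup_left,
    ← sdiff_eq, sdiff_le_iff]

end BInterval

open BInterval in
/-- Two intervals in a Boolean algebra are `∼`-related iff they have the same
length: `Δ(x ∨ y, y) = x ↔ ℓ(x) = ℓ(y)`. -/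
theorem sim_iff_length_eq {B : Type u} [BooleanAlgebra B] (x y : BInterval B) :
    idelta (ijoin x y) y inf_le_right le_sup_right = x ↔ length x = length y := by
  rw [BInterval.ext_iff, idelta_ijoin_lo_eq_iff, idelta_ijoin_hi_eq_iff, le_antisymm_iff,
    length_le_length_iff, length_le_length_iff]
  tauto
end

section
/- Let L be a cubic algebra, I a special subalgebra of L, and g ∈ L. Then I ∩ I_g = [g, 1] ∩ I, where I_g := {Δ(g ∨ f, f) : f ∈ I} and [g, 1] := {x ∈ L : g ≤ x}. -/
universe u

/-!
If `f ∈ I` and `Δ(g ⊔ f, f) ∈ I`, compatibility gives `Δ(g ⊔ f, f) ⊔ Δ(⊤, f) = ⊤`, i.e.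
`f · Δ(g ⊔ f, f) = ⊤`. Applying `(x · y) · y = x ⊔ y` and `⊤ · y = y` then shows
`Δ(g ⊔ f, f) = f ⊔ Δ(g ⊔ f, f) = g ⊔ f ≥ g`. Conversely, `x ≥ g` gives `Δ(g ⊔ x, x) = Δ(x, x) = x`.
-/

namespace CubicAlgebra

variable {L : Type u} [CubicAlgebra L]

theorem top_dot (y : L) : dot ⊤ y = y := by
  rw [dot_def, top_sup_eq, Δ_invol y ⊤ le_top, sup_idem]

theorem dot_Δ_of_le {f y : L} (h : f ≤ y) : dot f (Δ y f) = Δ ⊤ f ⊔ Δ y f := by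
  rw [dot_def, sup_comm f, Δ_join f y h, Δ_invol f y h]

theorem Δ_eq_of_sup_Δ_top_eq_top {f y : L} (h : f ≤ y) (hcompat : Δ y f ⊔ Δ ⊤ f = ⊤) :
    Δ y f = y := by
  have hdot : dot f (Δ y f) = ⊤ := by rw [dot_Δ_of_le h, sup_comm, hcompat]
  have hsup : Δ y f = f ⊔ Δ y f := by simpa only [hdot, top_dot] using dot_dot f (Δ y f)
  rw [hsup, sup_comm, Δ_join f y h]

end CubicAlgebra

open CubicAlgebra in
/-- `I ∩ I_g = [g, ⊤] ∩ I`. -/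
theorem inter_shift {L : Type u} [CubicAlgebra L] (I : Set L)
    (hI : IsSpecial I) (g : L) :
    I ∩ shift I g = {x : L | g ≤ x} ∩ I := by
  ext x
  simp only [Set.mem_inter_iff, Set.mem_ofPred_eq, shift]
  constructor
  · rintro ⟨hx, f, hf, rfl⟩
    have hΔ := Δ_eq_of_sup_Δ_top_eq_top le_sup_right (hI.compat _ hx _ hf)
    refine ⟨?_, hx⟩
    rw [hΔ]
    exact le_sup_left
  · rintro ⟨hg, hx⟩
    exact ⟨hx, x, hx, by rw [sup_eq_right.mpr hg, Δ_self]⟩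
end

section
/- Let L be a cubic algebra, I a special subalgebra of L, and g ∈ I. Then {g·f : f ∈ I} = [g, 1] → I; that is, the set of implications g·f := Δ(1, Δ(g ∨ f, f)) ∨ f for f ∈ I equals {h ∈ I : h ∨ k = 1 for all k ∈ L with g ≤ k}. -/
/-!
For `a = Δ(g ⊔ f, f)` we have `a ≤ g ⊔ f`, so `g·f ⊔ g = Δ(⊤, a) ⊔ (g ⊔ f)` lies above
`Δ(⊤, a) ⊔ a = ⊤`; hence every `g·f` with `f ∈ I` lies in `[g, ⊤] → I`. Conversely, if
`h ⊔ g = ⊤` then `g·h = Δ(⊤, Δ(⊤, h)) ⊔ h = h`.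
-/

universe u

namespace CubicAlgebra

variable {L : Type u} [CubicAlgebra L]

theorem dot_sup_left_eq_top (x y : L) : dot x y ⊔ x = ⊤ := by
  have ha : Δ (x ⊔ y) y ≤ x ⊔ y :=
    le_sup_left.trans (Δ_join y (x ⊔ y) le_sup_right).le
  refine top_unique ?_
  calc (⊤ : L) = Δ ⊤ (Δ (x ⊔ y) y) ⊔ Δ (x ⊔ y) y := (Δ_join _ ⊤ le_top).symm
    _ ≤ Δ ⊤ (Δ (x ⊔ y) y) ⊔ (x ⊔ y) := sup_le_sup_left ha _
    _ = dot x y ⊔ x := by rw [dot_def, sup_assoc, sup_comm y x]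

theorem dot_sup_eq_top_of_le {x k : L} (y : L) (h : x ≤ k) : dot x y ⊔ k = ⊤ :=
  top_unique (dot_sup_left_eq_top x y ▸ sup_le_sup_left h _)

theorem dot_eq_right_of_sup_eq_top {x y : L} (h : x ⊔ y = ⊤) : dot x y = y := by
  rw [dot_def, h, Δ_invol y ⊤ le_top, sup_idem]

end CubicAlgebra

open CubicAlgebra in
/-- For `g ∈ I`: `{g·f : f ∈ I} = [g, ⊤] → I`. -/
theorem dot_set_eq_sarrow {L : Type u} [CubicAlgebra L] (I : Set L)
    (hI : IsSpecial I) (g : L) (hg : g ∈ I) :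
    {z : L | ∃ f ∈ I, z = dot g f} = sarrow {x : L | g ≤ x} I := by
  ext z
  constructor
  · rintro ⟨f, hf, rfl⟩
    exact ⟨hI.dot_mem g hg f hf, fun k hk => dot_sup_eq_top_of_le f hk⟩
  · rintro ⟨hz, hz_sup⟩
    have hgz : g ⊔ z = ⊤ := sup_comm z g ▸ hz_sup g le_rfl
    exact ⟨z, hz, (dot_eq_right_of_sup_eq_top hgz).symm⟩
end

section
/- Let L be a cubic algebra and let J ⊆ I be special subalgebras of L. Then I ∩ Δ(J, I) = J, where Δ(J, I) := J ∨ Δ(1, J → I) with J → I := {h ∈ I : h ∨ g = 1 for all g ∈ J}, Δ(1, B) := {Δ(1, b) : b ∈ B}, and A ∨ B := {a ∧ b : a ∈ A, b ∈ B, and a ∧ b exists in L}. -/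
universe u

/-! An element of `I` lying below `Δ(⊤, h)` with `h ∈ I` forces `Δ(⊤, h) = ⊤` by compatibility of `I`,
so a meet `g ∧ Δ(⊤, h)` with `g ∈ J` that lies in `I` is just `g`. Conversely every `g ∈ J` is
`g ∧ Δ(⊤, ⊤)`, since `Δ(x, x) = x`. -/

namespace CubicAlgebra

variable {L : Type u} [CubicAlgebra L]

theorem isMeet_of_le {a b : L} (h : a ≤ b) : IsMeet a b a :=
  ⟨le_rfl, h, fun _ hc _ => hc⟩

theorem IsMeet.eq_left_of_le {a b m : L} (hm : IsMeet a b m) (h : a ≤ b) : m = a :=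
  le_antisymm hm.1 (hm.2.2 a le_rfl h)

theorem IsSpecial.Δ_top_eq_top_of_le {I : Set L} (hI : IsSpecial I) {x h : L} (hx : x ∈ I)
    (hh : h ∈ I) (hxh : x ≤ Δ ⊤ h) : Δ ⊤ h = ⊤ :=
  (sup_eq_right.2 hxh).symm.trans (hI.compat x hx h hh)

theorem top_mem_sarrow {J I : Set L} (hI : (⊤ : L) ∈ I) : (⊤ : L) ∈ sarrow J I :=
  ⟨hI, fun g _ => top_sup_eq g⟩

theorem subset_sDelta {J I : Set L} (hI : (⊤ : L) ∈ I) : J ⊆ sDelta J I :=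
  fun g hg => ⟨g, hg, ⊤, ⟨⊤, top_mem_sarrow hI, Δ_self ⊤⟩, isMeet_of_le le_top⟩

theorem inter_sDelta_subset {J I : Set L} (hI : IsSpecial I) : I ∩ sDelta J I ⊆ J := by
  rintro x ⟨hxI, g, hgJ, _, ⟨h, hh, rfl⟩, hm⟩
  have htop : Δ ⊤ h = ⊤ := hI.Δ_top_eq_top_of_le hxI hh.1 hm.2.1
  have hg : g ≤ Δ ⊤ h := htop.symm ▸ le_top
  rwa [hm.eq_left_of_le hg]

end CubicAlgebra

open CubicAlgebra in
theorem inter_sDelta_general {L : Type u} [CubicAlgebra L] (I J : Set L)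
    (hI : IsSpecial I) (hJI : J ⊆ I) :
    I ∩ sDelta J I = J :=
  (inter_sDelta_subset hI).antisymm fun _ hg => ⟨hJI hg, subset_sDelta hI.top_mem hg⟩

open CubicAlgebra in
/-- For special subalgebras `J ⊆ I`: `I ∩ Δ(J, I) = J`. -/
theorem inter_sDelta {L : Type u} [CubicAlgebra L] (I J : Set L)
    (hI : IsSpecial I) (hJ : IsSpecial J) (hJI : J ⊆ I) :
    I ∩ sDelta J I = J :=
  inter_sDelta_general I J hI hJI
end

section
/- Let L be a cubic algebra and let J ⊆ I be special subalgebras of L. Then Δ(J, Δ(J, I)) = J ∨ (J → I), where for a subset K ⊆ L with J ⊆ K we set J → K := {h ∈ K : h ∨ g = 1 for all g ∈ J} and Δ(J, K) := J ∨ Δ(1, J → K), with Δ(1, B) := {Δ(1, b) : b ∈ B} and A ∨ B := {a ∧ b : a ∈ A, b ∈ B, and a ∧ b exists in L}. -/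
/-!
An element of `J → (J ∨ B)` is a meet `a ∧ b` with `a ∈ J` that joins `a` to `⊤`, which forces
`a = ⊤`; with `⊤ ∈ J` and the compatibility of `I` this gives `J → Δ(J, I) = Δ(⊤, J → I)`.
Since `Δ(⊤, -)` is an involution, `Δ(J, Δ(J, I)) = J ∨ Δ(⊤, Δ(⊤, J → I)) = J ∨ (J → I)`.
-/

universe u

namespace CubicAlgebra

variable {L : Type u} [CubicAlgebra L]

theorem isMeet_top_left (b : L) : IsMeet ⊤ b b :=
  ⟨le_top, le_rfl, fun _ _ hc => hc⟩

theorem IsMeet.eq_of_top_left {b m : L} (h : IsMeet ⊤ b m) : m = b :=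
  le_antisymm h.2.1 (h.2.2 b le_top le_rfl)

theorem image_Δ_top_image_Δ_top (S : Set L) : Δ ⊤ '' (Δ ⊤ '' S) = S := by
  rw [Set.image_image]
  simp only [Δ_invol _ ⊤ le_top, Set.image_id']

theorem sarrow_svee_subset (J B : Set L) : sarrow J (svee J B) ⊆ B := by
  rintro h ⟨⟨a, ha, b, hb, hmeet⟩, hcompl⟩
  have ha_top : a = ⊤ := by simpa [sup_eq_right.2 hmeet.1] using hcompl a ha
  subst ha_top
  rwa [hmeet.eq_of_top_left]

theorem sarrow_svee_eq {J B : Set L} (htop : ⊤ ∈ J) (hB : ∀ b ∈ B, ∀ g ∈ J, b ⊔ g = ⊤) :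
    sarrow J (svee J B) = B :=
  (sarrow_svee_subset J B).antisymm fun b hb =>
    ⟨⟨⊤, htop, b, hb, isMeet_top_left b⟩, hB b hb⟩

theorem sarrow_sDelta {I J : Set L} (hI : IsSpecial I) (htop : ⊤ ∈ J) (hJI : J ⊆ I) :
    sarrow J (sDelta J I) = Δ ⊤ '' sarrow J I := by
  refine sarrow_svee_eq htop ?_
  rintro _ ⟨b, hb, rfl⟩ g hg
  rw [sup_comm]
  exact hI.compat g (hJI hg) b hb.1

end CubicAlgebra

open CubicAlgebra in
/-- For special subalgebras `J ⊆ I`: `Δ(J, Δ(J, I)) = J ∨ (J → I)`. -/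
theorem sDelta_sDelta {L : Type u} [CubicAlgebra L] (I J : Set L)
    (hI : IsSpecial I) (hJ : IsSpecial J) (hJI : J ⊆ I) :
    sDelta J (sDelta J I) = svee J (sarrow J I) := by
  rw [sDelta, sarrow_sDelta hI hJ.top_mem hJI, image_Δ_top_image_Δ_top]
end
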